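/- For fixed points x, y ∈ ℝⁿ, the Poincaré gyrospace distance d_gyr(x,y) = (2/√(-K))·arctanh(√(-K)·‖(-x) ⊕_K y‖₂) converges to 2‖x - y‖₂ as K → 0⁻. -/

import Mathlib

open Filter Topology

/-- Möbius addition with curvature `K` on `ℝⁿ`. -/
noncomputable def mobiusAdd {n : ℕ} (K : ℝ) (x y : EuclideanSpace ℝ (Fin n)) :
    EuclideanSpace ℝ (Fin n) :=
  (1 / (1 - 2 * K * (inner ℝ x y : ℝ) + K ^ 2 * ‖x‖ ^ 2 * ‖y‖ ^ 2)) •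
    ((1 - 2 * K * (inner ℝ x y : ℝ) - K * ‖y‖ ^ 2) • x + (1 + K * ‖x‖ ^ 2) • y)

/-- The inverse hyperbolic tangent. -/
noncomputable def artanh (x : ℝ) : ℝ := (1 / 2) * Real.log ((1 + x) / (1 - x))

/-! At `K = 0` Möbius addition is vector addition, and it depends continuously on `K`, so
`r_K = ‖(-x) ⊕_K y‖ → ‖x - y‖`. With `t = √(-K) → 0⁺` the distance is `2 · artanh (t r_K) / t`,
and since `artanh 0 = 0`, `artanh' 0 = 1`, the quotient `artanh (t r) / t` tends to the limit of `r`. -/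

theorem hasDerivAt_artanh_zero : HasDerivAt artanh 1 0 := by
  have hquot : HasDerivAt (fun s : ℝ => (1 + s) / (1 - s)) 2 0 := by
    simpa [Pi.div_def, one_add_one_eq_two] using ((hasDerivAt_id' (0 : ℝ)).const_add 1).div
      ((hasDerivAt_id' (0 : ℝ)).const_sub 1) (by norm_num)
  unfold artanh
  simpa using (hquot.log (by norm_num)).const_mul (1 / 2 : ℝ)

theorem tendsto_comp_mul_div_of_hasDerivAt {𝕜 α : Type*} [NontriviallyNormedField 𝕜]
    {f : 𝕜 → 𝕜} {f' r₀ : 𝕜} (hf : HasDerivAt f f' 0) (hf0 : f 0 = 0)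
    {l : Filter α} {t r : α → 𝕜} (ht : Tendsto t l (𝓝 0)) (ht0 : ∀ᶠ a in l, t a ≠ 0)
    (hr : Tendsto r l (𝓝 r₀)) :
    Tendsto (fun a => f (t a * r a) / t a) l (𝓝 (r₀ * f')) := by
  have hfactor : ∀ u, f u = u * dslope f 0 u := fun u => by
    simpa [hf0] using (sub_smul_dslope f 0 u).symm
  have hslope : Tendsto (dslope f 0) (𝓝 0) (𝓝 f') := by
    simpa [dslope_same, hf.deriv] using
      (continuousAt_dslope_same.2 hf.differentiableAt).tendsto
  have hprod : Tendsto (fun a => t a * r a) l (𝓝 0) := by simpa using ht.mul hr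
  refine (hr.mul (hslope.comp hprod)).congr' (ht0.mono fun a ha => ?_)
  simp only [Function.comp_apply, hfactor (t a * r a)]
  field_simp

theorem mobiusAdd_zero_curvature {n : ℕ} (x y : EuclideanSpace ℝ (Fin n)) :
    mobiusAdd 0 x y = x + y := by
  simp [mobiusAdd]

theorem continuousAt_mobiusAdd_curvature {n : ℕ} {K : ℝ} (x y : EuclideanSpace ℝ (Fin n))
    (hK : 1 - 2 * K * (inner ℝ x y : ℝ) + K ^ 2 * ‖x‖ ^ 2 * ‖y‖ ^ 2 ≠ 0) :
    ContinuousAt (fun K => mobiusAdd K x y) K := by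
  have hscale : ContinuousAt
      (fun K : ℝ => 1 / (1 - 2 * K * (inner ℝ x y : ℝ) + K ^ 2 * ‖x‖ ^ 2 * ‖y‖ ^ 2)) K :=
    continuousAt_const.div (by fun_prop) hK
  exact hscale.smul (by fun_prop)

theorem tendsto_sqrt_neg_nhdsLT_zero :
    Tendsto (fun K : ℝ => Real.sqrt (-K)) (𝓝[<] 0) (𝓝[>] 0) := by
  refine tendsto_nhdsWithin_of_tendsto_nhds_of_eventually_within _ ?_ ?_
  · simpa [Function.comp_def] using
      ((Real.continuous_sqrt.comp continuous_neg).tendsto 0).mono_left nhdsWithin_le_nhds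
  · filter_upwards [self_mem_nhdsWithin] with K (hK : K < 0)
    exact Real.sqrt_pos.2 (neg_pos.2 hK)

/-- The Poincaré gyrospace distance converges to (twice) the Euclidean distance
as `K → 0⁻`. -/
theorem gyroDist_poincare_tendsto {n : ℕ} (x y : EuclideanSpace ℝ (Fin n)) :
    Tendsto
      (fun K : ℝ => (2 / Real.sqrt (-K)) * artanh (Real.sqrt (-K) * ‖mobiusAdd K (-x) y‖))
      (𝓝[<] 0) (𝓝 (2 * ‖x - y‖)) := by
  have hsqrt := tendsto_sqrt_neg_nhdsLT_zero
  have hmobius : Tendsto (fun K => ‖mobiusAdd K (-x) y‖) (𝓝[<] 0) (𝓝 ‖x - y‖) := by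
    have := (continuousAt_mobiusAdd_curvature (K := 0) (-x) y (by norm_num)).tendsto.norm
    rw [mobiusAdd_zero_curvature, neg_add_eq_sub, norm_sub_rev] at this
    exact this.mono_left nhdsWithin_le_nhds
  have hquot := tendsto_comp_mul_div_of_hasDerivAt hasDerivAt_artanh_zero (by simp [artanh])
    (tendsto_nhds_of_tendsto_nhdsWithin hsqrt)
    ((tendsto_nhdsWithin_iff.1 hsqrt).2.mono fun _ h => ne_of_gt h) hmobius
  simpa [mul_div_assoc', div_mul_eq_mul_div] using hquot.const_mul 2
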